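/- arXiv:1602.03515 — 4 statements merged into one kernel-verified Lean document; each statement's English description precedes it below -/
import Mathlib

section
/- Let r_1, r_2 be nonnegative integers with r_1 + r_2 ≥ 1. Define f_1(x) := Σ_{r=1}^∞ x^{1−2r}/(2r(2r−1)), f_2(x) := Σ_{r=2}^∞ x^{2−2r}/((2r−1)(2r−2)), and R_{r_1,r_2}(x) := −(r_1 + r_2 − 1)(x·log x − x) + r_2·(log x + 1) − (r_1 + r_2)·f_1(x) − r_2·f_2(x). Then for every x ≥ 3, −(r_1 + r_2 − 1)·log x ≤ R'_{r_1,r_2}(x) ≤ −δ_{(r_1,r_2),(1,0)}·log(1 − x^{−2}) − δ_{(r_1,r_2),(0,1)}·log(1 − x^{−1}), where δ_{(r_1,r_2),(a,b)} equals 1 if (r_1,r_2) = (a,b) and 0 otherwise, and R' denotes the derivative with respect to x. -/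
/-!
With `t = x⁻¹`, both series are combinations of `Σ t^(2k+1)/(2k+1) = (log(1+t) - log(1-t))/2`
and `Σ t^(2k+2)/(2k+2) = -log(1-t²)/2` (split `1/(m(m+1)) = 1/m - 1/(m+1)`). Rewriting the
logarithms in terms of `log x`, `log (x ± 1)` gives, for `x > 1`,
`R(x) = x log x + (r₁+r₂-1) x - (r₁/2)(x+1) log(x+1) - (r₁/2+r₂)(x-1) log(x-1)`, hence
`R'(x) = log x - (r₁/2) log(x+1) - (r₁/2+r₂) log(x-1)`. The bounds then follow from
`(x+1)(x-1) ≤ x²` and, when `r₁ + r₂ ≥ 2`, from `x ≤ (x-1)²` for `x ≥ 3`.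
-/

noncomputable section

/-- `f₁(x) := Σ_{r=1}^∞ x^{1−2r}/(2r(2r−1))`. -/
def f1 (x : ℝ) : ℝ :=
  ∑' r : ℕ, x ^ (1 - 2 * ((r : ℤ) + 1)) / ((2 * ((r : ℝ) + 1)) * (2 * ((r : ℝ) + 1) - 1))

/-- `f₂(x) := Σ_{r=2}^∞ x^{2−2r}/((2r−1)(2r−2))`. -/
def f2 (x : ℝ) : ℝ :=
  ∑' r : ℕ, x ^ (2 - 2 * ((r : ℤ) + 2)) / ((2 * ((r : ℝ) + 2) - 1) * (2 * ((r : ℝ) + 2) - 2))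

/-- `R_{r₁,r₂}(x) := −(r₁+r₂−1)(x log x − x) + r₂(log x + 1) − (r₁+r₂) f₁(x) − r₂ f₂(x)`. -/
def Rfun (r1 r2 : ℕ) (x : ℝ) : ℝ :=
  -((r1 : ℝ) + r2 - 1) * (x * Real.log x - x) + (r2 : ℝ) * (Real.log x + 1)
    - ((r1 : ℝ) + r2) * f1 x - (r2 : ℝ) * f2 x

open Real

lemma hasSum_pow_odd_div {t : ℝ} (ht : |t| < 1) :
    HasSum (fun k : ℕ => t ^ (2 * k + 1) / (2 * k + 1)) ((log (1 + t) - log (1 - t)) / 2) := by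
  refine ((hasSum_log_sub_log_of_abs_lt_one ht).div_const 2).congr_fun fun k => ?_
  field_simp

lemma hasSum_pow_even_div {t : ℝ} (ht : |t| < 1) :
    HasSum (fun k : ℕ => t ^ (2 * k + 2) / (2 * k + 2)) (-log (1 - t ^ 2) / 2) := by
  have ht2 : |t ^ 2| < 1 := by rw [abs_pow]; exact pow_lt_one₀ (abs_nonneg t) ht two_ne_zero
  refine ((hasSum_pow_div_log_of_abs_lt_one ht2).div_const 2).congr_fun fun k => ?_
  rw [← pow_mul]
  field_simp
  ring_nf

lemma hasSum_pow_odd_div_succ {t : ℝ} (ht : |t| < 1) :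
    HasSum (fun k : ℕ => t ^ (2 * k + 3) / (2 * k + 3))
      ((log (1 + t) - log (1 - t)) / 2 - t) := by
  have h := (hasSum_nat_add_iff' 1).2 (hasSum_pow_odd_div ht)
  norm_num at h
  refine h.congr_fun fun k => ?_
  ring_nf

lemma inv_pow_div_mul_add_one {x : ℝ} (hx : x ≠ 0) (m : ℕ) :
    x⁻¹ ^ (m + 1) / ((m + 1) * (m + 2))
      = x⁻¹ ^ (m + 1) / (m + 1) - x * (x⁻¹ ^ (m + 2) / (m + 2)) := by
  rw [pow_succ _ (m + 1)]
  field_simp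
  ring

lemma log_one_add_inv {x : ℝ} (hx : x ≠ 0) (hx' : x + 1 ≠ 0) :
    log (1 + x⁻¹) = log (x + 1) - log x := by
  rw [← log_div hx' hx, add_div, div_self hx, one_div]

lemma log_one_sub_inv {x : ℝ} (hx : x ≠ 0) (hx' : x - 1 ≠ 0) :
    log (1 - x⁻¹) = log (x - 1) - log x := by
  rw [← log_div hx' hx, sub_div, div_self hx, one_div]

lemma log_one_sub_inv_sq {x : ℝ} (hx : x ≠ 0) (hx₁ : x + 1 ≠ 0) (hx₂ : x - 1 ≠ 0) :
    log (1 - x⁻¹ ^ 2) = log (x + 1) + log (x - 1) - 2 * log x := by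
  rw [show 1 - x⁻¹ ^ 2 = (x + 1) * (x - 1) / x ^ 2 by field_simp; ring,
    log_div (mul_ne_zero hx₁ hx₂) (pow_ne_zero 2 hx), log_mul hx₁ hx₂, log_pow]
  push_cast
  ring

lemma f1_eq {x : ℝ} (hx : 1 < x) :
    f1 x = ((x + 1) * log (x + 1) + (x - 1) * log (x - 1)) / 2 - x * log x := by
  have hx0 : x ≠ 0 := by positivity
  have ht : |x⁻¹| < 1 := by
    rw [abs_inv, abs_of_pos (by positivity)]
    exact inv_lt_one_of_one_lt₀ hx
  have hterm : ∀ r : ℕ,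
      x ^ (1 - 2 * ((r : ℤ) + 1)) / ((2 * ((r : ℝ) + 1)) * (2 * ((r : ℝ) + 1) - 1))
        = x⁻¹ ^ (2 * r + 1) / (2 * r + 1) - x * (x⁻¹ ^ (2 * r + 2) / (2 * r + 2)) := by
    intro r
    have := inv_pow_div_mul_add_one hx0 (2 * r)
    push_cast at this
    rw [show (1 - 2 * ((r : ℤ) + 1)) = -((2 * r + 1 : ℕ) : ℤ) by push_cast; ring,
      zpow_neg, zpow_natCast, inv_pow]
    linear_combination this
  have hsum := (hasSum_pow_odd_div ht).sub ((hasSum_pow_even_div ht).mul_left x)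
  rw [f1, tsum_congr hterm, hsum.tsum_eq, log_one_add_inv hx0 (by positivity),
    log_one_sub_inv hx0 (by linarith), log_one_sub_inv_sq hx0 (by positivity) (by linarith)]
  ring

lemma f2_eq {x : ℝ} (hx : 1 < x) :
    f2 x = 1 + log x - ((x + 1) * log (x + 1) - (x - 1) * log (x - 1)) / 2 := by
  have hx0 : x ≠ 0 := by positivity
  have ht : |x⁻¹| < 1 := by
    rw [abs_inv, abs_of_pos (by positivity)]
    exact inv_lt_one_of_one_lt₀ hx
  have hterm : ∀ r : ℕ,
      x ^ (2 - 2 * ((r : ℤ) + 2)) / ((2 * ((r : ℝ) + 2) - 1) * (2 * ((r : ℝ) + 2) - 2))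
        = x⁻¹ ^ (2 * r + 2) / (2 * r + 2) - x * (x⁻¹ ^ (2 * r + 3) / (2 * r + 3)) := by
    intro r
    have := inv_pow_div_mul_add_one hx0 (2 * r + 1)
    push_cast at this
    rw [show (2 - 2 * ((r : ℤ) + 2)) = -((2 * r + 2 : ℕ) : ℤ) by push_cast; ring,
      zpow_neg, zpow_natCast, inv_pow]
    linear_combination this
  have hsum := (hasSum_pow_even_div ht).sub ((hasSum_pow_odd_div_succ ht).mul_left x)
  rw [f2, tsum_congr hterm, hsum.tsum_eq, log_one_add_inv hx0 (by positivity),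
    log_one_sub_inv hx0 (by linarith), log_one_sub_inv_sq hx0 (by positivity) (by linarith),
    mul_sub, mul_inv_cancel₀ hx0]
  ring

lemma log_add_one_add_log_sub_one_le {x : ℝ} (hx : 1 < x) :
    log (x + 1) + log (x - 1) ≤ 2 * log x := by
  rw [← log_mul (by positivity) (by linarith), two_mul,
    ← log_mul (by positivity) (by positivity)]
  exact log_le_log (by nlinarith) (by nlinarith)

lemma log_le_two_mul_log_sub_one {x : ℝ} (hx : 3 ≤ x) : log x ≤ 2 * log (x - 1) := by
  rw [two_mul, ← log_mul (by linarith) (by linarith)]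
  exact log_le_log (by positivity) (by nlinarith)

lemma Rfun_eq (r1 r2 : ℕ) {x : ℝ} (hx : 1 < x) :
    Rfun r1 r2 x = x * log x + ((r1 : ℝ) + r2 - 1) * x - (r1 / 2 : ℝ) * ((x + 1) * log (x + 1))
      - ((r1 : ℝ) / 2 + r2) * ((x - 1) * log (x - 1)) := by
  rw [Rfun, f1_eq hx, f2_eq hx]
  ring

lemma hasDerivAt_Rfun (r1 r2 : ℕ) {x : ℝ} (hx : 1 < x) :
    HasDerivAt (Rfun r1 r2)
      (log x - (r1 / 2 : ℝ) * log (x + 1) - ((r1 : ℝ) / 2 + r2) * log (x - 1)) x := by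
  have hφ := hasDerivAt_mul_log (x := x) (by positivity)
  have hφp := (hasDerivAt_mul_log (x := x + 1) (by positivity)).comp_add_const x 1
  have hφm := (hasDerivAt_mul_log (x := x - 1) (by linarith)).comp_sub_const x 1
  have hG := ((hφ.add ((hasDerivAt_id x).const_mul ((r1 : ℝ) + r2 - 1))).sub
    (hφp.const_mul (r1 / 2 : ℝ))).sub (hφm.const_mul ((r1 : ℝ) / 2 + r2))
  have hEq : Rfun r1 r2 =ᶠ[nhds x] fun y => y * log y + ((r1 : ℝ) + r2 - 1) * y
      - (r1 / 2 : ℝ) * ((y + 1) * log (y + 1))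
      - ((r1 : ℝ) / 2 + r2) * ((y - 1) * log (y - 1)) := by
    filter_upwards [Ioi_mem_nhds hx] with y hy using Rfun_eq r1 r2 hy
  exact (hG.congr_of_eventuallyEq hEq).congr_deriv (by ring)

/-- for `r₁ + r₂ ≥ 1` and `x ≥ 3`,
`−(r₁+r₂−1) log x ≤ R'_{r₁,r₂}(x) ≤ −δ_{(r₁,r₂),(1,0)} log(1−x^{−2}) − δ_{(r₁,r₂),(0,1)} log(1−x^{−1})`. -/
theorem statement_8 (r1 r2 : ℕ) (h : 1 ≤ r1 + r2) (x : ℝ) (hx : 3 ≤ x) :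
    -((r1 : ℝ) + r2 - 1) * Real.log x ≤ deriv (Rfun r1 r2) x ∧
    deriv (Rfun r1 r2) x
      ≤ -(if (r1, r2) = (1, 0) then (1 : ℝ) else 0) * Real.log (1 - x ^ (-2 : ℤ))
        - (if (r1, r2) = (0, 1) then (1 : ℝ) else 0) * Real.log (1 - x⁻¹) := by
  have hx0 : x ≠ 0 := by positivity
  rw [(hasDerivAt_Rfun r1 r2 (by linarith)).deriv, zpow_neg, zpow_ofNat, ← inv_pow,
    log_one_sub_inv_sq hx0 (by positivity) (by linarith), log_one_sub_inv hx0 (by linarith)]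
  have hprod := log_add_one_add_log_sub_one_le (x := x) (by linarith)
  have hsub_le : log (x - 1) ≤ log x := log_le_log (by linarith) (by linarith)
  have hsub_le_add : log (x - 1) ≤ log (x + 1) := log_le_log (by linarith) (by linarith)
  have hhalf := log_le_two_mul_log_sub_one hx
  have hr1 : (0 : ℝ) ≤ r1 := r1.cast_nonneg
  have hr2 : (0 : ℝ) ≤ r2 := r2.cast_nonneg
  constructor
  · nlinarith [mul_nonneg hr1 (sub_nonneg.2 hprod), mul_nonneg hr2 (sub_nonneg.2 hsub_le)]
  obtain ⟨rfl, rfl⟩ | ⟨rfl, rfl⟩ | h2 :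
      (r1 = 1 ∧ r2 = 0) ∨ (r1 = 0 ∧ r2 = 1) ∨ 2 ≤ r1 + r2 := by omega
  · norm_num
    linarith
  · norm_num
  · have h2' : (2 : ℝ) ≤ r1 + r2 := by exact_mod_cast h2
    rw [if_neg (by grind), if_neg (by grind)]
    have hc : 0 ≤ log (x - 1) := log_nonneg (by linarith)
    nlinarith [mul_nonneg hr1 (sub_nonneg.2 hsub_le_add), mul_nonneg (sub_nonneg.2 h2') hc]
end
end

section
/- For every real t ≥ e, W(t) ≤ log t − log log t + 1.024·(log log t)/(log t), where W(t) is the unique w ≥ 0 with w·e^w = t. -/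
set_option maxHeartbeats 800000

lemma log5_le : Real.log 5 ≤ 160944/100000 := by
  have h2 := Real.log_two_lt_d9
  have habs := Real.abs_log_sub_add_sum_range_le (x := 1/5) (by rw [abs_of_pos] <;> norm_num) 10
  rw [abs_le, abs_of_pos (by norm_num : (0:ℝ) < 1/5)] at habs
  have hlo := habs.1
  have hlog : Real.log (1 - 1/5 : ℝ) = 2 * Real.log 2 - Real.log 5 := by
    rw [show (1 - 1/5 : ℝ) = 2^2/5 by norm_num, Real.log_div (by norm_num) (by norm_num), Real.log_pow]
    push_cast; ring
  rw [Finset.sum_range_succ, Finset.sum_range_succ, Finset.sum_range_succ, Finset.sum_range_succ, Finset.sum_range_succ, Finset.sum_range_succ, Finset.sum_range_succ, Finset.sum_range_succ, Finset.sum_range_succ, Finset.sum_range_succ, Finset.sum_range_zero, hlog] at hlo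
  norm_num at hlo
  linarith

lemma log13_le : Real.log 13 ≤ 256496/100000 := by
  have h2 := Real.log_two_lt_d9
  have habs := Real.abs_log_sub_add_sum_range_le (x := 5/13) (by rw [abs_of_pos] <;> norm_num) 14
  rw [abs_le, abs_of_pos (by norm_num : (0:ℝ) < 5/13)] at habs
  have hlo := habs.1
  have hlog : Real.log (1 - 5/13 : ℝ) = 3 * Real.log 2 - Real.log 13 := by
    rw [show (1 - 5/13 : ℝ) = 2^3/13 by norm_num, Real.log_div (by norm_num) (by norm_num), Real.log_pow]
    push_cast; ring
  rw [Finset.sum_range_succ, Finset.sum_range_succ, Finset.sum_range_succ, Finset.sum_range_succ, Finset.sum_range_succ, Finset.sum_range_succ, Finset.sum_range_succ, Finset.sum_range_succ, Finset.sum_range_succ, Finset.sum_range_succ, Finset.sum_range_succ, Finset.sum_range_succ, Finset.sum_range_succ, Finset.sum_range_succ, Finset.sum_range_zero, hlog] at hlo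
  norm_num at hlo
  linarith

lemma log18_le : Real.log 18 ≤ 289038/100000 := by
  have h2 := Real.log_two_lt_d9
  have habs := Real.abs_log_sub_add_sum_range_le (x := 1/9) (by rw [abs_of_pos] <;> norm_num) 8
  rw [abs_le, abs_of_pos (by norm_num : (0:ℝ) < 1/9)] at habs
  have hlo := habs.1
  have hlog : Real.log (1 - 1/9 : ℝ) = 4 * Real.log 2 - Real.log 18 := by
    rw [show (1 - 1/9 : ℝ) = 2^4/18 by norm_num, Real.log_div (by norm_num) (by norm_num), Real.log_pow]
    push_cast; ring
  rw [Finset.sum_range_succ, Finset.sum_range_succ, Finset.sum_range_succ, Finset.sum_range_succ, Finset.sum_range_succ, Finset.sum_range_succ, Finset.sum_range_succ, Finset.sum_range_succ, Finset.sum_range_zero, hlog] at hlo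
  norm_num at hlo
  linarith

lemma log22_le : Real.log 22 ≤ 309105/100000 := by
  have h2 := Real.log_two_lt_d9
  have habs := Real.abs_log_sub_add_sum_range_le (x := 3/11) (by rw [abs_of_pos] <;> norm_num) 10
  rw [abs_le, abs_of_pos (by norm_num : (0:ℝ) < 3/11)] at habs
  have hlo := habs.1
  have hlog : Real.log (1 - 3/11 : ℝ) = 4 * Real.log 2 - Real.log 22 := by
    rw [show (1 - 3/11 : ℝ) = 2^4/22 by norm_num, Real.log_div (by norm_num) (by norm_num), Real.log_pow]
    push_cast; ring
  rw [Finset.sum_range_succ, Finset.sum_range_succ, Finset.sum_range_succ, Finset.sum_range_succ, Finset.sum_range_succ, Finset.sum_range_succ, Finset.sum_range_succ, Finset.sum_range_succ, Finset.sum_range_succ, Finset.sum_range_succ, Finset.sum_range_zero, hlog] at hlo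
  norm_num at hlo
  linarith

lemma log26_le : Real.log 26 ≤ 325810/100000 := by
  have h2 := Real.log_two_lt_d9
  have habs := Real.abs_log_sub_add_sum_range_le (x := 5/13) (by rw [abs_of_pos] <;> norm_num) 14
  rw [abs_le, abs_of_pos (by norm_num : (0:ℝ) < 5/13)] at habs
  have hlo := habs.1
  have hlog : Real.log (1 - 5/13 : ℝ) = 4 * Real.log 2 - Real.log 26 := by
    rw [show (1 - 5/13 : ℝ) = 2^4/26 by norm_num, Real.log_div (by norm_num) (by norm_num), Real.log_pow]
    push_cast; ring
  rw [Finset.sum_range_succ, Finset.sum_range_succ, Finset.sum_range_succ, Finset.sum_range_succ, Finset.sum_range_succ, Finset.sum_range_succ, Finset.sum_range_succ, Finset.sum_range_succ, Finset.sum_range_succ, Finset.sum_range_succ, Finset.sum_range_succ, Finset.sum_range_succ, Finset.sum_range_succ, Finset.sum_range_succ, Finset.sum_range_zero, hlog] at hlo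
  norm_num at hlo
  linarith

lemma log36_le : Real.log 36 ≤ 358352/100000 := by
  have h2 := Real.log_two_lt_d9
  have habs := Real.abs_log_sub_add_sum_range_le (x := 1/9) (by rw [abs_of_pos] <;> norm_num) 8
  rw [abs_le, abs_of_pos (by norm_num : (0:ℝ) < 1/9)] at habs
  have hlo := habs.1
  have hlog : Real.log (1 - 1/9 : ℝ) = 5 * Real.log 2 - Real.log 36 := by
    rw [show (1 - 1/9 : ℝ) = 2^5/36 by norm_num, Real.log_div (by norm_num) (by norm_num), Real.log_pow]
    push_cast; ring
  rw [Finset.sum_range_succ, Finset.sum_range_succ, Finset.sum_range_succ, Finset.sum_range_succ, Finset.sum_range_succ, Finset.sum_range_succ, Finset.sum_range_succ, Finset.sum_range_succ, Finset.sum_range_zero, hlog] at hlo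
  norm_num at hlo
  linarith

lemma tangent_log {a ca : ℝ} (L : ℝ) (ha : 0 < a) (hL : 0 < L) (hca : Real.log a ≤ ca) :
    Real.log L ≤ ca + L/a - 1 := by
  have h := Real.log_le_sub_one_of_pos (div_pos hL ha)
  rw [Real.log_div hL.ne' ha.ne'] at h
  linarith

lemma br0 (L M : ℝ) (hp : 1 ≤ L) (hq : L ≤ 5/2) (hM0 : 0 ≤ M) (hub : M ≤ L - 1) :
    0 ≤ 3/125*L^4 + 128/125*L^3 + (16384/15625*L^2 - 7808/15625*L^3)*M + (1048576/1953125*L - 2023424/5859375*L^2)*M^2 + (134217728/732421875 - 1048576/5859375*L)*M^3 := by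
  nlinarith [mul_nonneg hM0 hM0, mul_nonneg (mul_nonneg hM0 hM0) hM0,
    mul_nonneg (sub_nonneg.2 hub) hM0, mul_nonneg (sub_nonneg.2 hub) (mul_nonneg hM0 hM0),
    mul_nonneg (sub_nonneg.2 hq) hM0, mul_nonneg (sub_nonneg.2 hq) (mul_nonneg hM0 hM0),
    mul_nonneg (sub_nonneg.2 hq) (mul_nonneg (mul_nonneg hM0 hM0) hM0),
    mul_nonneg (sub_nonneg.2 hp) hM0, sq_nonneg (L-1), sq_nonneg M]

lemma br1 (L M : ℝ) (hp : 5/2 ≤ L) (hq : L ≤ 10) (hM0 : 0 ≤ M)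
    (hub : M ≤ 160944/100000 + L/5 - 1) :
    0 ≤ 3/125*L^4 + 128/125*L^3 + (16384/15625*L^2 - 7808/15625*L^3)*M + (1048576/1953125*L - 2023424/5859375*L^2)*M^2 + (134217728/732421875 - 1048576/5859375*L)*M^3 := by
  have hp' : (0:ℝ) ≤ L - 5/2 := by linarith
  have hq' : (0:ℝ) ≤ 10 - L := by linarith
  have hb0 : (0:ℝ) ≤ (160944/100000 + L/5 - 1) := le_trans hM0 hub
  have hBn : (0:ℝ) ≤ 7808/15625*L^3 - 16384/15625*L^2 := by nlinarith [sq_nonneg L]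
  have hCn : (0:ℝ) ≤ 2023424/5859375*L^2 - 1048576/1953125*L := by nlinarith
  have hDn : (0:ℝ) ≤ 1048576/5859375*L - 134217728/732421875 := by linarith
  have hsum : (0:ℝ) ≤ M^2 + M*(160944/100000 + L/5 - 1) + (160944/100000 + L/5 - 1)^2 := by nlinarith [sq_nonneg (M + (160944/100000 + L/5 - 1)), sq_nonneg (M - (160944/100000 + L/5 - 1))]
  have h1 : (0:ℝ) ≤ ((160944/100000 + L/5 - 1) - M) * ((7808/15625*L^3 - 16384/15625*L^2)
      + (2023424/5859375*L^2 - 1048576/1953125*L)*(M + (160944/100000 + L/5 - 1))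
      + (1048576/5859375*L - 134217728/732421875)*(M^2 + M*(160944/100000 + L/5 - 1) + (160944/100000 + L/5 - 1)^2)) :=
    mul_nonneg (by linarith) (add_nonneg (add_nonneg hBn
      (mul_nonneg hCn (by linarith))) (mul_nonneg hDn hsum))
  have h2 : (0:ℝ) ≤ 3/125*L^4 + 128/125*L^3 + (16384/15625*L^2 - 7808/15625*L^3)*(160944/100000 + L/5 - 1) + (1048576/1953125*L - 2023424/5859375*L^2)*(160944/100000 + L/5 - 1)^2 + (134217728/732421875 - 1048576/5859375*L)*(160944/100000 + L/5 - 1)^3 := by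
    nlinarith [mul_nonneg (pow_nonneg hp' 0) (pow_nonneg hq' 4),
    mul_nonneg (pow_nonneg hp' 1) (pow_nonneg hq' 3),
    mul_nonneg (pow_nonneg hp' 2) (pow_nonneg hq' 2),
    mul_nonneg (pow_nonneg hp' 3) (pow_nonneg hq' 1),
    mul_nonneg (pow_nonneg hp' 4) (pow_nonneg hq' 0)]
  nlinarith [h1, h2]

lemma br2 (L M : ℝ) (hp : 10 ≤ L) (hq : L ≤ 16) (hM0 : 0 ≤ M)
    (hub : M ≤ 256496/100000 + L/13 - 1) :
    0 ≤ 3/125*L^4 + 128/125*L^3 + (16384/15625*L^2 - 7808/15625*L^3)*M + (1048576/1953125*L - 2023424/5859375*L^2)*M^2 + (134217728/732421875 - 1048576/5859375*L)*M^3 := by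
  have hp' : (0:ℝ) ≤ L - 10 := by linarith
  have hq' : (0:ℝ) ≤ 16 - L := by linarith
  have hb0 : (0:ℝ) ≤ (256496/100000 + L/13 - 1) := le_trans hM0 hub
  have hBn : (0:ℝ) ≤ 7808/15625*L^3 - 16384/15625*L^2 := by nlinarith [sq_nonneg L]
  have hCn : (0:ℝ) ≤ 2023424/5859375*L^2 - 1048576/1953125*L := by nlinarith
  have hDn : (0:ℝ) ≤ 1048576/5859375*L - 134217728/732421875 := by linarith
  have hsum : (0:ℝ) ≤ M^2 + M*(256496/100000 + L/13 - 1) + (256496/100000 + L/13 - 1)^2 := by nlinarith [sq_nonneg (M + (256496/100000 + L/13 - 1)), sq_nonneg (M - (256496/100000 + L/13 - 1))]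
  have h1 : (0:ℝ) ≤ ((256496/100000 + L/13 - 1) - M) * ((7808/15625*L^3 - 16384/15625*L^2)
      + (2023424/5859375*L^2 - 1048576/1953125*L)*(M + (256496/100000 + L/13 - 1))
      + (1048576/5859375*L - 134217728/732421875)*(M^2 + M*(256496/100000 + L/13 - 1) + (256496/100000 + L/13 - 1)^2)) :=
    mul_nonneg (by linarith) (add_nonneg (add_nonneg hBn
      (mul_nonneg hCn (by linarith))) (mul_nonneg hDn hsum))
  have h2 : (0:ℝ) ≤ 3/125*L^4 + 128/125*L^3 + (16384/15625*L^2 - 7808/15625*L^3)*(256496/100000 + L/13 - 1) + (1048576/1953125*L - 2023424/5859375*L^2)*(256496/100000 + L/13 - 1)^2 + (134217728/732421875 - 1048576/5859375*L)*(256496/100000 + L/13 - 1)^3 := by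
    nlinarith [mul_nonneg (pow_nonneg hp' 0) (pow_nonneg hq' 4),
    mul_nonneg (pow_nonneg hp' 1) (pow_nonneg hq' 3),
    mul_nonneg (pow_nonneg hp' 2) (pow_nonneg hq' 2),
    mul_nonneg (pow_nonneg hp' 3) (pow_nonneg hq' 1),
    mul_nonneg (pow_nonneg hp' 4) (pow_nonneg hq' 0)]
  nlinarith [h1, h2]

lemma br3 (L M : ℝ) (hp : 16 ≤ L) (hq : L ≤ 20) (hM0 : 0 ≤ M)
    (hub : M ≤ 289038/100000 + L/18 - 1) :
    0 ≤ 3/125*L^4 + 128/125*L^3 + (16384/15625*L^2 - 7808/15625*L^3)*M + (1048576/1953125*L - 2023424/5859375*L^2)*M^2 + (134217728/732421875 - 1048576/5859375*L)*M^3 := by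
  have hp' : (0:ℝ) ≤ L - 16 := by linarith
  have hq' : (0:ℝ) ≤ 20 - L := by linarith
  have hb0 : (0:ℝ) ≤ (289038/100000 + L/18 - 1) := le_trans hM0 hub
  have hBn : (0:ℝ) ≤ 7808/15625*L^3 - 16384/15625*L^2 := by nlinarith [sq_nonneg L]
  have hCn : (0:ℝ) ≤ 2023424/5859375*L^2 - 1048576/1953125*L := by nlinarith
  have hDn : (0:ℝ) ≤ 1048576/5859375*L - 134217728/732421875 := by linarith
  have hsum : (0:ℝ) ≤ M^2 + M*(289038/100000 + L/18 - 1) + (289038/100000 + L/18 - 1)^2 := by nlinarith [sq_nonneg (M + (289038/100000 + L/18 - 1)), sq_nonneg (M - (289038/100000 + L/18 - 1))]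
  have h1 : (0:ℝ) ≤ ((289038/100000 + L/18 - 1) - M) * ((7808/15625*L^3 - 16384/15625*L^2)
      + (2023424/5859375*L^2 - 1048576/1953125*L)*(M + (289038/100000 + L/18 - 1))
      + (1048576/5859375*L - 134217728/732421875)*(M^2 + M*(289038/100000 + L/18 - 1) + (289038/100000 + L/18 - 1)^2)) :=
    mul_nonneg (by linarith) (add_nonneg (add_nonneg hBn
      (mul_nonneg hCn (by linarith))) (mul_nonneg hDn hsum))
  have h2 : (0:ℝ) ≤ 3/125*L^4 + 128/125*L^3 + (16384/15625*L^2 - 7808/15625*L^3)*(289038/100000 + L/18 - 1) + (1048576/1953125*L - 2023424/5859375*L^2)*(289038/100000 + L/18 - 1)^2 + (134217728/732421875 - 1048576/5859375*L)*(289038/100000 + L/18 - 1)^3 := by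
    nlinarith [mul_nonneg (pow_nonneg hp' 0) (pow_nonneg hq' 4),
    mul_nonneg (pow_nonneg hp' 1) (pow_nonneg hq' 3),
    mul_nonneg (pow_nonneg hp' 2) (pow_nonneg hq' 2),
    mul_nonneg (pow_nonneg hp' 3) (pow_nonneg hq' 1),
    mul_nonneg (pow_nonneg hp' 4) (pow_nonneg hq' 0)]
  nlinarith [h1, h2]

lemma br4 (L M : ℝ) (hp : 20 ≤ L) (hq : L ≤ 24) (hM0 : 0 ≤ M)
    (hub : M ≤ 309105/100000 + L/22 - 1) :
    0 ≤ 3/125*L^4 + 128/125*L^3 + (16384/15625*L^2 - 7808/15625*L^3)*M + (1048576/1953125*L - 2023424/5859375*L^2)*M^2 + (134217728/732421875 - 1048576/5859375*L)*M^3 := by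
  have hp' : (0:ℝ) ≤ L - 20 := by linarith
  have hq' : (0:ℝ) ≤ 24 - L := by linarith
  have hb0 : (0:ℝ) ≤ (309105/100000 + L/22 - 1) := le_trans hM0 hub
  have hBn : (0:ℝ) ≤ 7808/15625*L^3 - 16384/15625*L^2 := by nlinarith [sq_nonneg L]
  have hCn : (0:ℝ) ≤ 2023424/5859375*L^2 - 1048576/1953125*L := by nlinarith
  have hDn : (0:ℝ) ≤ 1048576/5859375*L - 134217728/732421875 := by linarith
  have hsum : (0:ℝ) ≤ M^2 + M*(309105/100000 + L/22 - 1) + (309105/100000 + L/22 - 1)^2 := by nlinarith [sq_nonneg (M + (309105/100000 + L/22 - 1)), sq_nonneg (M - (309105/100000 + L/22 - 1))]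
  have h1 : (0:ℝ) ≤ ((309105/100000 + L/22 - 1) - M) * ((7808/15625*L^3 - 16384/15625*L^2)
      + (2023424/5859375*L^2 - 1048576/1953125*L)*(M + (309105/100000 + L/22 - 1))
      + (1048576/5859375*L - 134217728/732421875)*(M^2 + M*(309105/100000 + L/22 - 1) + (309105/100000 + L/22 - 1)^2)) :=
    mul_nonneg (by linarith) (add_nonneg (add_nonneg hBn
      (mul_nonneg hCn (by linarith))) (mul_nonneg hDn hsum))
  have h2 : (0:ℝ) ≤ 3/125*L^4 + 128/125*L^3 + (16384/15625*L^2 - 7808/15625*L^3)*(309105/100000 + L/22 - 1) + (1048576/1953125*L - 2023424/5859375*L^2)*(309105/100000 + L/22 - 1)^2 + (134217728/732421875 - 1048576/5859375*L)*(309105/100000 + L/22 - 1)^3 := by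
    nlinarith [mul_nonneg (pow_nonneg hp' 0) (pow_nonneg hq' 4),
    mul_nonneg (pow_nonneg hp' 1) (pow_nonneg hq' 3),
    mul_nonneg (pow_nonneg hp' 2) (pow_nonneg hq' 2),
    mul_nonneg (pow_nonneg hp' 3) (pow_nonneg hq' 1),
    mul_nonneg (pow_nonneg hp' 4) (pow_nonneg hq' 0)]
  nlinarith [h1, h2]

lemma br5 (L M : ℝ) (hp : 24 ≤ L) (hq : L ≤ 30) (hM0 : 0 ≤ M)
    (hub : M ≤ 325810/100000 + L/26 - 1) :
    0 ≤ 3/125*L^4 + 128/125*L^3 + (16384/15625*L^2 - 7808/15625*L^3)*M + (1048576/1953125*L - 2023424/5859375*L^2)*M^2 + (134217728/732421875 - 1048576/5859375*L)*M^3 := by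
  have hp' : (0:ℝ) ≤ L - 24 := by linarith
  have hq' : (0:ℝ) ≤ 30 - L := by linarith
  have hb0 : (0:ℝ) ≤ (325810/100000 + L/26 - 1) := le_trans hM0 hub
  have hBn : (0:ℝ) ≤ 7808/15625*L^3 - 16384/15625*L^2 := by nlinarith [sq_nonneg L]
  have hCn : (0:ℝ) ≤ 2023424/5859375*L^2 - 1048576/1953125*L := by nlinarith
  have hDn : (0:ℝ) ≤ 1048576/5859375*L - 134217728/732421875 := by linarith
  have hsum : (0:ℝ) ≤ M^2 + M*(325810/100000 + L/26 - 1) + (325810/100000 + L/26 - 1)^2 := by nlinarith [sq_nonneg (M + (325810/100000 + L/26 - 1)), sq_nonneg (M - (325810/100000 + L/26 - 1))]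
  have h1 : (0:ℝ) ≤ ((325810/100000 + L/26 - 1) - M) * ((7808/15625*L^3 - 16384/15625*L^2)
      + (2023424/5859375*L^2 - 1048576/1953125*L)*(M + (325810/100000 + L/26 - 1))
      + (1048576/5859375*L - 134217728/732421875)*(M^2 + M*(325810/100000 + L/26 - 1) + (325810/100000 + L/26 - 1)^2)) :=
    mul_nonneg (by linarith) (add_nonneg (add_nonneg hBn
      (mul_nonneg hCn (by linarith))) (mul_nonneg hDn hsum))
  have h2 : (0:ℝ) ≤ 3/125*L^4 + 128/125*L^3 + (16384/15625*L^2 - 7808/15625*L^3)*(325810/100000 + L/26 - 1) + (1048576/1953125*L - 2023424/5859375*L^2)*(325810/100000 + L/26 - 1)^2 + (134217728/732421875 - 1048576/5859375*L)*(325810/100000 + L/26 - 1)^3 := by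
    nlinarith [mul_nonneg (pow_nonneg hp' 0) (pow_nonneg hq' 4),
    mul_nonneg (pow_nonneg hp' 1) (pow_nonneg hq' 3),
    mul_nonneg (pow_nonneg hp' 2) (pow_nonneg hq' 2),
    mul_nonneg (pow_nonneg hp' 3) (pow_nonneg hq' 1),
    mul_nonneg (pow_nonneg hp' 4) (pow_nonneg hq' 0)]
  nlinarith [h1, h2]

lemma br6 (L M : ℝ) (hp : 30 ≤ L) (hM0 : 0 ≤ M)
    (hub : M ≤ 358352/100000 + L/36 - 1) :
    0 ≤ 3/125*L^4 + 128/125*L^3 + (16384/15625*L^2 - 7808/15625*L^3)*M + (1048576/1953125*L - 2023424/5859375*L^2)*M^2 + (134217728/732421875 - 1048576/5859375*L)*M^3 := by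
  have hp' : (0:ℝ) ≤ L - 30 := by linarith
  have hb0 : (0:ℝ) ≤ (358352/100000 + L/36 - 1) := le_trans hM0 hub
  have hBn : (0:ℝ) ≤ 7808/15625*L^3 - 16384/15625*L^2 := by nlinarith [sq_nonneg L]
  have hCn : (0:ℝ) ≤ 2023424/5859375*L^2 - 1048576/1953125*L := by nlinarith
  have hDn : (0:ℝ) ≤ 1048576/5859375*L - 134217728/732421875 := by linarith
  have hsum : (0:ℝ) ≤ M^2 + M*(358352/100000 + L/36 - 1) + (358352/100000 + L/36 - 1)^2 := by nlinarith [sq_nonneg (M + (358352/100000 + L/36 - 1)), sq_nonneg (M - (358352/100000 + L/36 - 1))]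
  have h1 : (0:ℝ) ≤ ((358352/100000 + L/36 - 1) - M) * ((7808/15625*L^3 - 16384/15625*L^2)
      + (2023424/5859375*L^2 - 1048576/1953125*L)*(M + (358352/100000 + L/36 - 1))
      + (1048576/5859375*L - 134217728/732421875)*(M^2 + M*(358352/100000 + L/36 - 1) + (358352/100000 + L/36 - 1)^2)) :=
    mul_nonneg (by linarith) (add_nonneg (add_nonneg hBn
      (mul_nonneg hCn (by linarith))) (mul_nonneg hDn hsum))
  have h2 : (0:ℝ) ≤ 3/125*L^4 + 128/125*L^3 + (16384/15625*L^2 - 7808/15625*L^3)*(358352/100000 + L/36 - 1) + (1048576/1953125*L - 2023424/5859375*L^2)*(358352/100000 + L/36 - 1)^2 + (134217728/732421875 - 1048576/5859375*L)*(358352/100000 + L/36 - 1)^3 := by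
    nlinarith [pow_nonneg hp' 1,
    pow_nonneg hp' 2,
    pow_nonneg hp' 3,
    pow_nonneg hp' 4]
  nlinarith [h1, h2]

lemma core_G (L : ℝ) (hL : 1 ≤ L) :
    0 ≤ 3/125*L^4 + 128/125*L^3 + (16384/15625*L^2 - 7808/15625*L^3)*(Real.log L) + (1048576/1953125*L - 2023424/5859375*L^2)*(Real.log L)^2 + (134217728/732421875 - 1048576/5859375*L)*(Real.log L)^3 := by
  have hL0 : (0:ℝ) < L := by linarith
  have hM0 : 0 ≤ Real.log L := Real.log_nonneg hL
  rcases le_total L (5/2) with h|h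
  · exact br0 L _ hL h hM0 (Real.log_le_sub_one_of_pos hL0)
  rcases le_total L 10 with h2|h2
  · exact br1 L _ h h2 hM0 (tangent_log L (by norm_num) hL0 log5_le)
  rcases le_total L 16 with h3|h3
  · exact br2 L _ h2 h3 hM0 (tangent_log L (by norm_num) hL0 log13_le)
  rcases le_total L 20 with h4|h4
  · exact br3 L _ h3 h4 hM0 (tangent_log L (by norm_num) hL0 log18_le)
  rcases le_total L 24 with h5|h5
  · exact br4 L _ h4 h5 hM0 (tangent_log L (by norm_num) hL0 log22_le)
  rcases le_total L 30 with h6|h6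
  · exact br5 L _ h5 h6 hM0 (tangent_log L (by norm_num) hL0 log26_le)
  · exact br6 L _ h6 hM0 (tangent_log L (by norm_num) hL0 log36_le)


lemma step_lem (L M : ℝ) (hL1 : 1 ≤ L) (hM0 : 0 ≤ M)
    (hG : 0 ≤ 3/125*L^4 + 128/125*L^3 + (16384/15625*L^2 - 7808/15625*L^3)*M + (1048576/1953125*L - 2023424/5859375*L^2)*M^2 + (134217728/732421875 - 1048576/5859375*L)*M^3) :
    L ≤ (L - M + 1.024 * M / L) * Real.exp (1.024 * M / L) ∧ 0 < L - M + 1.024 * M / L := by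
  have hL0 : (0:ℝ) < L := by linarith
  have hx0 : 0 ≤ 1.024 * M / L := by positivity
  have hiden : (L - M + 1.024 * M / L) * (1 + 1.024 * M / L + (1.024 * M / L)^2/2 + (1.024 * M / L)^3/6) - L
      = M * (3/125*L^4 + 128/125*L^3 + (16384/15625*L^2 - 7808/15625*L^3)*M + (1048576/1953125*L - 2023424/5859375*L^2)*M^2 + (134217728/732421875 - 1048576/5859375*L)*M^3) / L^4 := by
    field_simp
    ring
  have hd : 0 ≤ M * (3/125*L^4 + 128/125*L^3 + (16384/15625*L^2 - 7808/15625*L^3)*M + (1048576/1953125*L - 2023424/5859375*L^2)*M^2 + (134217728/732421875 - 1048576/5859375*L)*M^3) / L^4 := div_nonneg (mul_nonneg hM0 hG) (by positivity)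
  have hcubpos : (0:ℝ) < 1 + 1.024 * M / L + (1.024 * M / L)^2/2 + (1.024 * M / L)^3/6 := by positivity
  have hkey : L ≤ (L - M + 1.024 * M / L) * (1 + 1.024 * M / L + (1.024 * M / L)^2/2 + (1.024 * M / L)^3/6) := by
    linarith [hiden, hd]
  have hupos : 0 < L - M + 1.024 * M / L := by
    rcases le_or_gt (L - M + 1.024 * M / L) 0 with hu|hu
    · have h5 : 0 ≤ (-(L - M + 1.024 * M / L)) * (1 + 1.024 * M / L + (1.024 * M / L)^2/2 + (1.024 * M / L)^3/6) :=
        mul_nonneg (by linarith) hcubpos.le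
      nlinarith [hkey, hL0]
    · exact hu
  refine ⟨?_, hupos⟩
  have hcub : 1 + 1.024 * M / L + (1.024 * M / L)^2/2 + (1.024 * M / L)^3/6 ≤ Real.exp (1.024 * M / L) := by
    have hs := Real.sum_le_exp_of_nonneg hx0 4
    rw [Finset.sum_range_succ, Finset.sum_range_succ, Finset.sum_range_succ,
      Finset.sum_range_succ, Finset.sum_range_zero] at hs
    norm_num [Nat.factorial] at hs
    linarith
  exact le_trans hkey (mul_le_mul_of_nonneg_left hcub hupos.le)

/-- for every `t ≥ e`, `W(t) ≤ log t − log log t + 1.024 (log log t)/(log t)`,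
where `W(t)` is the unique `w ≥ 0` with `w·e^w = t` (the principal Lambert `W` function). -/
theorem statement_12 (t : ℝ) (ht : Real.exp 1 ≤ t)
    (w : ℝ) (hw0 : 0 ≤ w) (hw : w * Real.exp w = t) :
    w ≤ Real.log t - Real.log (Real.log t)
        + 1.024 * Real.log (Real.log t) / Real.log t := by
  have ht0 : (0:ℝ) < t := lt_of_lt_of_le (Real.exp_pos 1) ht
  have hL1 : 1 ≤ Real.log t := by
    have := Real.log_le_log (Real.exp_pos 1) ht
    rwa [Real.log_exp] at this
  have hL0 : (0:ℝ) < Real.log t := by linarith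
  have hM0 : 0 ≤ Real.log (Real.log t) := Real.log_nonneg hL1
  obtain ⟨hLe, hupos⟩ := step_lem (Real.log t) (Real.log (Real.log t)) hL1 hM0
    (core_G (Real.log t) hL1)
  suffices h : t ≤ (Real.log t - Real.log (Real.log t) + 1.024 * Real.log (Real.log t) / Real.log t)
      * Real.exp (Real.log t - Real.log (Real.log t) + 1.024 * Real.log (Real.log t) / Real.log t) by
    by_contra hcon
    push_neg at hcon
    have hlt := mul_lt_mul hcon (Real.exp_le_exp.2 hcon.le) (Real.exp_pos _) hw0
    rw [hw] at hlt
    linarith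
  have hexpM : Real.exp (Real.log (Real.log t)) = Real.log t := Real.exp_log hL0
  have hexpL : Real.exp (Real.log t) = t := Real.exp_log ht0
  have h4 : Real.exp (Real.log t - Real.log (Real.log t) + 1.024 * Real.log (Real.log t) / Real.log t)
      = t / Real.log t * Real.exp (1.024 * Real.log (Real.log t) / Real.log t) := by
    rw [show Real.log t - Real.log (Real.log t) + 1.024 * Real.log (Real.log t) / Real.log t
        = Real.log t + 1.024 * Real.log (Real.log t) / Real.log t - Real.log (Real.log t) by ring,
      Real.exp_sub, Real.exp_add, hexpM, hexpL]
    ring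
  rw [h4]
  have h5 := mul_le_mul_of_nonneg_left hLe (div_nonneg ht0.le hL0.le)
  rw [div_mul_cancel₀ _ hL0.ne'] at h5
  calc t ≤ t / Real.log t * ((Real.log t - Real.log (Real.log t)
        + 1.024 * Real.log (Real.log t) / Real.log t)
        * Real.exp (1.024 * Real.log (Real.log t) / Real.log t)) := h5
    _ = (Real.log t - Real.log (Real.log t) + 1.024 * Real.log (Real.log t) / Real.log t)
        * (t / Real.log t * Real.exp (1.024 * Real.log (Real.log t) / Real.log t)) := by ring
end

section
/- Let T_F be the positive root of T² − 7.0604·T − 10.1186 = 0, let L ≥ 0 and S > 0 be real numbers. Suppose T_0 > T_F satisfies (T_0 − 7.0604 − 10.1186/T_0)·(log(T_0/(2π)) + L) = S and T_W > 0 satisfies T_W·(log(T_W/(2π)) + L) = S. Then T_0 ≤ T_F + T_W. -/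
/-!
Since `T_F − 7.0604 = 10.1186 / T_F > 10.1186 / T₀`, the factor `T₀ − 7.0604 − 10.1186 / T₀`
exceeds `T₀ − T_F`. So if `T₀ > T_F + T_W`, that factor exceeds `T_W`, while
`log (T₀ / 2π) + L ≥ log (T_W / 2π) + L > 0`; hence the left side of the equation for `T₀` would
exceed `T_W (log (T_W / 2π) + L) = S`.
-/

lemma sub_lt_sub_sub_div_of_root {a b r T : ℝ} (hb : 0 < b) (hr : 0 < r)
    (hroot : r ^ 2 - a * r - b = 0) (hrT : r < T) : T - r < T - a - b / T := by
  have hra : r - a = b / r := by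
    rw [eq_div_iff hr.ne']
    linear_combination hroot
  have : b / T < b / r := div_lt_div_of_pos_left hb hr hrT
  linarith

theorem statement_17_general (TF : ℝ) (hTF0 : 0 < TF)
    (hTF : TF ^ 2 - 7.0604 * TF - 10.1186 = 0)
    (L S : ℝ) (hS : 0 < S)
    (T0 : ℝ) (hT0 : TF < T0)
    (hT0eq : (T0 - 7.0604 - 10.1186 / T0) * (Real.log (T0 / (2 * Real.pi)) + L) = S)
    (TW : ℝ) (hTW : 0 < TW)
    (hTWeq : TW * (Real.log (TW / (2 * Real.pi)) + L) = S) :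
    T0 ≤ TF + TW := by
  by_contra! h
  have hfactor : T0 - TF < T0 - 7.0604 - 10.1186 / T0 :=
    sub_lt_sub_sub_div_of_root (by norm_num) hTF0 hTF hT0
  have hgTW : 0 < Real.log (TW / (2 * Real.pi)) + L :=
    pos_of_mul_pos_right (hTWeq ▸ hS) hTW.le
  have hlog : Real.log (TW / (2 * Real.pi)) ≤ Real.log (T0 / (2 * Real.pi)) :=
    Real.log_le_log (by positivity) (by gcongr; linarith)
  have : S < S :=
    calc S = TW * (Real.log (TW / (2 * Real.pi)) + L) := hTWeq.symm
      _ < (T0 - 7.0604 - 10.1186 / T0) * (Real.log (TW / (2 * Real.pi)) + L) :=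
        mul_lt_mul_of_pos_right (by linarith) hgTW
      _ ≤ (T0 - 7.0604 - 10.1186 / T0) * (Real.log (T0 / (2 * Real.pi)) + L) :=
        mul_le_mul_of_nonneg_left (by linarith) (by linarith)
      _ = S := hT0eq
  exact this.false

/-- with `T_F` the positive root of `T² − 7.0604T − 10.1186 = 0`, `L ≥ 0`,
`S > 0`, if `T₀ > T_F` satisfies `(T₀ − 7.0604 − 10.1186/T₀)(log(T₀/(2π)) + L) = S` and
`T_W > 0` satisfies `T_W (log(T_W/(2π)) + L) = S`, then `T₀ ≤ T_F + T_W`. -/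
theorem statement_17 (TF : ℝ) (hTF0 : 0 < TF)
    (hTF : TF ^ 2 - 7.0604 * TF - 10.1186 = 0)
    (L S : ℝ) (hL : 0 ≤ L) (hS : 0 < S)
    (T0 : ℝ) (hT0 : TF < T0)
    (hT0eq : (T0 - 7.0604 - 10.1186 / T0) * (Real.log (T0 / (2 * Real.pi)) + L) = S)
    (TW : ℝ) (hTW : 0 < TW)
    (hTWeq : TW * (Real.log (TW / (2 * Real.pi)) + L) = S) :
    T0 ≤ TF + TW :=
  statement_17_general TF hTF0 hTF L S hS T0 hT0 hT0eq TW hTW hTWeq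
end

section
/- Fix a number field K and set ν := (√5 − 1)·e^{√5}/2. For x ≥ 3 let a(x) := (√5−1)π√x/(2n_K) + 21.3270 + 33.3542/n_K, let w(x) ≥ 0 be the unique real with w(x)·e^{w(x)} = (e^{√5}/(2π))·δ_K·a(x), let T(x) := 8.2822 + a(x)/w(x), let ε_K(x) := max(0, d_K·log x − 3.6133·n_K·√x/T(x)), and let B(x) := (√x/π)·[(½·log²(e^{w(x)+1} + 33.5251·δ_K) − ½·log²δ_K + 3.9792·log δ_K − 3.4969)·n_K + 25.5362] + 1.0155·log Δ_K − 2.1042·n_K + 8.8590 + ε_K(x). Then as x → +∞, B(x) = n_K·(√x/(2π))·[ ¼·log²x − log x·log log x + (log δ_K + log(eν/n_K))·log x + (log log x)² − 2·(log δ_K + log(ν/n_K))·log log x + (2·log(ν/n_K) + 7.9584)·log δ_K + log²(ν/n_K) − 5.9938 ] + 25.5362·√x/π + o(√x). -/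
/-!
With `C = δ_K ν / (2 n_K)` the defining equation of `w` reads `w e^w = C √x + K₀`, so `w` is
the Lambert function `W` at `L = C √x + K₀`. Writing `ℓ = log L`, the expansion
`W = ℓ - log ℓ + (log ℓ)/ℓ + O((log ℓ / ℓ)²)` gives `(W + 1)² = (ℓ + 1 - log ℓ)² + 2 log ℓ + o(1)`;
moreover `log (e^{w+1} + c) = w + 1 + o(1/w)` and `ℓ = ½ log x + log C + O(x^{-1/2})`. Hence the
bracket of `B` equals the stated polynomial in `log x` and `log log x` up to `o(1)`, and the rest
of `B` is `O(log x)`.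
-/

open Filter Topology NumberField

noncomputable section

/-- `n_K`, the degree of `K` over `ℚ`, as a real number. -/
def nK (K : Type*) [Field K] [NumberField K] : ℝ := (Module.finrank ℚ K : ℝ)

/-- `Δ_K`, the absolute value of the discriminant of `K`, as a real number. -/
def DeltaK (K : Type*) [Field K] [NumberField K] : ℝ := |(NumberField.discr K : ℝ)|

/-- `δ_K := Δ_K^{1/n_K}`, the root discriminant of `K`. -/
def deltaK (K : Type*) [Field K] [NumberField K] : ℝ := DeltaK K ^ (1 / nK K)

/-- `d_K := r_1 + r_2 - 1`. -/
def dK (K : Type*) [Field K] [NumberField K] : ℝ :=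
  (NumberField.InfinitePlace.nrRealPlaces K : ℝ)
    + (NumberField.InfinitePlace.nrComplexPlaces K : ℝ) - 1

open Real Asymptotics

lemma one_le_nK (K : Type*) [Field K] [NumberField K] : 1 ≤ nK K := by
  unfold nK; exact_mod_cast Module.finrank_pos (R := ℚ) (M := K)

lemma one_le_deltaK (K : Type*) [Field K] [NumberField K] : 1 ≤ deltaK K := by
  have hΔ : 1 ≤ DeltaK K := by
    unfold DeltaK; rw [← Int.cast_abs]; exact_mod_cast Int.one_le_abs (discr_ne_zero K)
  exact one_le_rpow hΔ (by have := one_le_nK K; positivity)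

lemma log_one_add_sub_self_isBigO :
    (fun s : ℝ => log (1 + s) - s) =O[𝓝 0] fun s => s ^ 2 := by
  refine isBigO_iff.2 ⟨2, ?_⟩
  filter_upwards [Metric.ball_mem_nhds (0 : ℝ) one_half_pos] with s hs
  rw [Metric.mem_ball, dist_zero_right, Real.norm_eq_abs] at hs
  have h := abs_log_sub_add_sum_range_le (x := -s) (by rw [abs_neg]; linarith) 1
  simp only [Finset.sum_range_one, abs_neg, sub_neg_eq_add] at h
  rw [Real.norm_eq_abs, Real.norm_eq_abs, abs_pow, sq_abs, ← sq_abs]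
  calc |log (1 + s) - s| = |-s + log (1 + s)| := by rw [sub_eq_neg_add]
    _ ≤ |s| ^ 2 / (1 - |s|) := by simpa using h
    _ ≤ 2 * |s| ^ 2 := by
      rw [div_le_iff₀ (by linarith)]; nlinarith [sq_nonneg |s|]

section

variable {α : Type*} {l : Filter α} {g s : α → ℝ}

lemma tendsto_mul_log_one_add_sub_self (hs : Tendsto s l (𝓝 0))
    (hgs : Tendsto (fun x => g x * s x ^ 2) l (𝓝 0)) :
    Tendsto (fun x => g x * (log (1 + s x) - s x)) l (𝓝 0) :=
  ((isBigO_refl g l).mul (log_one_add_sub_self_isBigO.comp_tendsto hs)).trans_tendsto hgs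

lemma tendsto_mul_log_one_add {a : ℝ} (hs : Tendsto s l (𝓝 0))
    (hgs : Tendsto (fun x => g x * s x) l (𝓝 a)) :
    Tendsto (fun x => g x * log (1 + s x)) l (𝓝 a) := by
  have hgs2 : Tendsto (fun x => g x * s x ^ 2) l (𝓝 0) := by
    simpa [sq, mul_assoc] using hgs.mul hs
  simpa [mul_sub] using hgs.add (tendsto_mul_log_one_add_sub_self hs hgs2)

lemma tendsto_log_one_add (hs : Tendsto s l (𝓝 0)) :
    Tendsto (fun x => log (1 + s x)) l (𝓝 0) := by
  simpa using tendsto_mul_log_one_add (g := 1) hs (by simpa using hs)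

lemma tendsto_atTop_of_mul_exp_eq {w L : α → ℝ} (hL : Tendsto L l atTop)
    (hwL : ∀ᶠ x in l, w x * exp (w x) = L x) : Tendsto w l atTop := by
  refine tendsto_atTop_mono' l ?_ ((tendsto_log_atTop.comp hL).atTop_div_const two_pos)
  filter_upwards [hwL, hL.eventually_gt_atTop 0] with x hx hpos
  have hle : L x ≤ exp (2 * w x) := by
    rw [← hx, two_mul, exp_add]
    exact mul_le_mul_of_nonneg_right (by linarith [add_one_le_exp (w x)]) (exp_pos _).le
  have := (log_le_iff_le_exp hpos).2 hle
  simp only [Function.comp_apply]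
  linarith

lemma tendsto_log_exp_add_sq_sub_sq (κ : ℝ) :
    Tendsto (fun v => log (exp v + κ) ^ 2 - v ^ 2) atTop (𝓝 0) := by
  set s : ℝ → ℝ := fun v => κ * exp (-v)
  have hs : Tendsto s atTop (𝓝 0) := by
    simpa using tendsto_exp_neg_atTop_nhds_zero.const_mul κ
  have hvs : Tendsto (fun v => v * s v) atTop (𝓝 0) := by
    simpa [s, mul_left_comm] using (tendsto_pow_mul_exp_neg_atTop_nhds_zero 1).const_mul κ
  have h : Tendsto (fun v => 2 * (v * log (1 + s v)) + log (1 + s v) ^ 2) atTop (𝓝 0) := by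
    simpa using
      ((tendsto_mul_log_one_add hs hvs).const_mul 2).add ((tendsto_log_one_add hs).pow 2)
  refine h.congr' ?_
  filter_upwards [hs.eventually (lt_mem_nhds (show (-1 : ℝ) < 0 by norm_num))] with v hv
  have hsplit : exp v + κ = exp v * (1 + s v) := by
    simp only [s]; rw [exp_neg]; field_simp
  rw [hsplit, log_mul (exp_ne_zero v) (by linarith), log_exp]
  ring

/-- `(W(e^ℓ) + 1)²` up to `o(1)` as `ℓ → ∞`, where `W` is the Lambert function. -/
def lambertSqApprox (ℓ : ℝ) : ℝ := (ℓ + 1 - log ℓ) ^ 2 + 2 * log ℓ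

lemma tendsto_sq_add_one_sub_lambertSqApprox :
    Tendsto (fun w => (w + 1) ^ 2 - lambertSqApprox (w + log w)) atTop (𝓝 0) := by
  set u : ℝ → ℝ := fun w => log w / w
  have hu : Tendsto u atTop (𝓝 0) := isLittleO_log_id_atTop.tendsto_div_nhds_zero
  have hwu : Tendsto (fun w => w * u w ^ 2) atTop (𝓝 0) := by
    refine (by simpa using tendsto_pow_log_div_mul_add_atTop 1 0 2 one_ne_zero :
      Tendsto (fun w => log w ^ 2 / w) atTop (𝓝 0)).congr' ?_
    filter_upwards [eventually_ne_atTop 0] with w hw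
    simp only [u]; field_simp
  have h := ((tendsto_mul_log_one_add_sub_self hu hwu).const_mul 2).sub
    ((tendsto_log_one_add hu).pow 2)
  rw [mul_zero, zero_pow two_ne_zero, sub_zero] at h
  refine h.congr' ?_
  filter_upwards [eventually_ge_atTop 1] with w hw
  have hw0 : 0 < w := by linarith
  have hu0 : 0 ≤ u w := div_nonneg (log_nonneg hw) hw0.le
  have hlog : log (w + log w) = log w + log (1 + u w) := by
    rw [← log_mul hw0.ne' (by positivity)]; congr 1; simp only [u]; field_simp
  simp only [lambertSqApprox, hlog]
  simp only [u]; field_simp; ring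

lemma tendsto_lambertSqApprox_add_sub {y h : α → ℝ} (c : ℝ) (hy : Tendsto y l atTop)
    (hh : Tendsto h l (𝓝 0)) (hyh : Tendsto (fun x => y x * h x) l (𝓝 0)) :
    Tendsto (fun x => lambertSqApprox (y x + c + h x)
      - ((y x + c + 1 - log (y x)) ^ 2 + 2 * log (y x) - 2 * c)) l (𝓝 0) := by
  set s : α → ℝ := fun x => (c + h x) / y x
  have hch : Tendsto (fun x => c + h x) l (𝓝 c) := by simpa using tendsto_const_nhds.add hh
  have hs : Tendsto s l (𝓝 0) := hch.div_atTop hy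
  have hys : Tendsto (fun x => y x * s x) l (𝓝 c) := by
    refine hch.congr' ?_
    filter_upwards [hy.eventually_ne_atTop 0] with x hx
    simp only [s]; field_simp
  have hyr := tendsto_mul_log_one_add hs hys
  have hr := tendsto_log_one_add hs
  have hly : Tendsto (fun x => log (y x) / y x) l (𝓝 0) :=
    isLittleO_log_id_atTop.tendsto_div_nhds_zero.comp hy
  -- with `r = log (1 + s)` one has `log (y + c + h) = log y + r` and `y r → c`
  have key := (((((((hyh.const_mul 2).sub (hyr.const_mul 2)).add
    ((hh.sub hr).const_mul (2 * (c + 1)))).sub ((hly.mul (hyh.sub hyr)).const_mul 2)).add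
    ((hh.sub hr).pow 2)).add (hr.const_mul 2)).add (tendsto_const_nhds (x := 2 * c)))
  convert key.congr' ?_ using 2
  · ring
  filter_upwards [hy.eventually_gt_atTop 0,
    hs.eventually (lt_mem_nhds (show (-1 : ℝ) < 0 by norm_num))] with x hy0 hs1
  have hlog : log (y x + c + h x) = log (y x) + log (1 + s x) := by
    rw [← log_mul hy0.ne' (by linarith)]; congr 1; simp only [s]; field_simp; ring
  simp only [lambertSqApprox, hlog]
  field_simp
  ring

end

lemma tendsto_lambertSqApprox_log_mul_sqrt_add_sub {C : ℝ} (hC : 0 < C) (K₀ : ℝ) :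
    Tendsto (fun x => lambertSqApprox (log (C * √x + K₀))
      - ((log x / 2 - log (log x) + log (2 * C) + 1) ^ 2 + 2 * log (log x) - 2 * log (2 * C)))
      atTop (𝓝 0) := by
  set s : ℝ → ℝ := fun x => K₀ / (C * √x)
  have hy : Tendsto (fun x => log √x) atTop atTop := tendsto_log_atTop.comp tendsto_sqrt_atTop
  have hs : Tendsto s atTop (𝓝 0) :=
    tendsto_const_nhds.div_atTop (tendsto_sqrt_atTop.const_mul_atTop hC)
  have hys : Tendsto (fun x => log √x * s x) atTop (𝓝 0) := by
    have := (isLittleO_log_id_atTop.tendsto_div_nhds_zero.comp tendsto_sqrt_atTop).const_mul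
      (K₀ / C)
    rw [mul_zero] at this
    refine this.congr' ?_
    filter_upwards [eventually_gt_atTop 0] with x hx
    have := sqrt_pos.2 hx
    simp only [s, Function.comp_apply, id]; field_simp
  refine (tendsto_lambertSqApprox_add_sub (log C) hy (tendsto_log_one_add hs)
    (tendsto_mul_log_one_add hs hys)).congr' ?_
  filter_upwards [eventually_gt_atTop 1,
    hs.eventually (lt_mem_nhds (show (-1 : ℝ) < 0 by norm_num))] with x hx hs1
  have hsx : 0 < √x := sqrt_pos.2 (by linarith)
  have hlx : 0 < log x := log_pos hx
  have hL : log (C * √x + K₀) = log √x + log C + log (1 + s x) := by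
    rw [add_comm (log √x), ← log_mul hC.ne' hsx.ne', ← log_mul (by positivity) (by linarith)]
    congr 1; simp only [s]; field_simp
  rw [hL, log_sqrt (by linarith), log_div hlx.ne' two_ne_zero, log_mul two_ne_zero hC.ne']
  ring

lemma tendsto_sq_log_exp_add_sub {C : ℝ} (hC : 0 < C) (K₀ κ : ℝ) {w : ℝ → ℝ}
    (hw : ∀ᶠ x in atTop, w x * exp (w x) = C * √x + K₀) :
    Tendsto (fun x => log (exp (w x + 1) + κ) ^ 2
      - ((log x / 2 - log (log x) + log (2 * C) + 1) ^ 2 + 2 * log (log x) - 2 * log (2 * C)))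
      atTop (𝓝 0) := by
  have hL : Tendsto (fun x => C * √x + K₀) atTop atTop :=
    tendsto_atTop_add_const_right _ _ (tendsto_sqrt_atTop.const_mul_atTop hC)
  have hw_top := tendsto_atTop_of_mul_exp_eq hL hw
  have h := (((tendsto_log_exp_add_sq_sub_sq κ).comp
    (tendsto_atTop_add_const_right _ 1 hw_top)).add
    (tendsto_sq_add_one_sub_lambertSqApprox.comp hw_top)).add
    (tendsto_lambertSqApprox_log_mul_sqrt_add_sub hC K₀)
  rw [add_zero, add_zero] at h
  refine h.congr' ?_
  filter_upwards [hw, hL.eventually_gt_atTop 0] with x hx hpos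
  have hw0 : 0 < w x := (mul_pos_iff_of_pos_right (exp_pos _)).1 (hx ▸ hpos)
  have hlog : w x + log (w x) = log (C * √x + K₀) := by
    rw [← hx, log_mul hw0.ne' (exp_ne_zero _), log_exp, add_comm]
  simp only [Function.comp_apply, hlog]
  ring

lemma max_zero_mul_log_sub_isLittleO_sqrt (d : ℝ) {q : ℝ → ℝ}
    (hq : ∀ᶠ x in atTop, 0 ≤ q x) :
    (fun x => max 0 (d * log x - q x)) =o[atTop] fun x => √x := by
  have hlog : log =o[atTop] fun x => √x :=
    (isLittleO_log_rpow_atTop one_half_pos).congr_right fun x => (sqrt_eq_rpow x).symm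
  refine IsBigO.trans_isLittleO (isBigO_iff.2 ⟨|d|, ?_⟩) hlog
  filter_upwards [hq, eventually_ge_atTop 1] with x hqx hx
  have hlx := log_nonneg hx
  rw [Real.norm_eq_abs, Real.norm_eq_abs, abs_of_nonneg (le_max_left _ _), abs_of_nonneg hlx]
  exact max_le (by positivity) (by nlinarith [le_abs_self d])

open Asymptotics in
theorem statement_18_general
    (K : Type*) [Field K] [NumberField K]
    (ν : ℝ) (hν : ν = (Real.sqrt 5 - 1) * Real.exp (Real.sqrt 5) / 2)
    (a w T ε B : ℝ → ℝ)
    (ha : ∀ x : ℝ, 3 ≤ x → a x = (Real.sqrt 5 - 1) * Real.pi * Real.sqrt x / (2 * nK K)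
            + 21.3270 + 33.3542 / nK K)
    (hw : ∀ x : ℝ, 3 ≤ x →
            w x * Real.exp (w x) = Real.exp (Real.sqrt 5) / (2 * Real.pi) * (deltaK K * a x))
    (hT : ∀ x : ℝ, 3 ≤ x → T x = 8.2822 + a x / w x)
    (hε : ∀ x : ℝ, 3 ≤ x →
            ε x = max 0 (dK K * Real.log x - 3.6133 * nK K * Real.sqrt x / T x))
    (hB : ∀ x : ℝ, 3 ≤ x →
            B x = Real.sqrt x / Real.pi *
                ((1 / 2 * Real.log (Real.exp (w x + 1) + 33.5251 * deltaK K) ^ 2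
                    - 1 / 2 * Real.log (deltaK K) ^ 2
                    + 3.9792 * Real.log (deltaK K) - 3.4969) * nK K
                  + 25.5362)
              + 1.0155 * Real.log (DeltaK K) - 2.1042 * nK K + 8.8590 + ε x) :
    (fun x : ℝ => B x
        - (nK K * (Real.sqrt x / (2 * Real.pi)) *
            (1 / 4 * Real.log x ^ 2
              - Real.log x * Real.log (Real.log x)
              + (Real.log (deltaK K) + Real.log (Real.exp 1 * ν / nK K)) * Real.log x
              + Real.log (Real.log x) ^ 2
              - 2 * (Real.log (deltaK K) + Real.log (ν / nK K)) * Real.log (Real.log x)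
              + (2 * Real.log (ν / nK K) + 7.9584) * Real.log (deltaK K)
              + Real.log (ν / nK K) ^ 2
              - 5.9938)
          + 25.5362 * Real.sqrt x / Real.pi))
      =o[atTop] fun x : ℝ => Real.sqrt x := by
  have hn := one_le_nK K
  have hδ := one_le_deltaK K
  have hs5 : 0 < Real.sqrt 5 - 1 := sub_pos.2 (by rw [lt_sqrt zero_le_one]; norm_num)
  have hν0 : 0 < ν := by rw [hν]; positivity
  set C := deltaK K * ν / (2 * nK K) with hC_def
  set K₀ := exp (Real.sqrt 5) / (2 * π) * (deltaK K * (21.3270 + 33.3542 / nK K))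
    with hK₀_def
  have hC : 0 < C := by positivity
  have hL : ∀ x : ℝ, 3 ≤ x → w x * exp (w x) = C * √x + K₀ := fun x hx => by
    rw [hw x hx, ha x hx, hC_def, hK₀_def, hν]; field_simp; ring
  have hE := tendsto_sq_log_exp_add_sub hC K₀ (33.5251 * deltaK K)
    (eventually_atTop.2 ⟨3, hL⟩)
  have hmain := (isBigO_refl (fun x => √x) atTop).mul_isLittleO
    ((isLittleO_one_iff ℝ).2 (mul_zero (nK K / (2 * π)) ▸ hE.const_mul _))
  have hT0 : ∀ x : ℝ, 3 ≤ x → 0 < T x := fun x hx => by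
    have ha0 : 0 < a x := by rw [ha x hx]; positivity
    have hw0 : 0 < w x := (mul_pos_iff_of_pos_right (exp_pos _)).1 (by rw [hL x hx]; positivity)
    rw [hT x hx]; positivity
  have hε' := max_zero_mul_log_sub_isLittleO_sqrt (dK K) (q := fun x => 3.6133 * nK K * √x / T x)
    (eventually_atTop.2 ⟨3, fun x hx => by have := hT0 x hx; positivity⟩)
  have hconst : (fun _ : ℝ => 1.0155 * log (DeltaK K) - 2.1042 * nK K + 8.8590)
      =o[atTop] fun x => √x :=
    isLittleO_const_left.2 (Or.inr (tendsto_norm_atTop_atTop.comp tendsto_sqrt_atTop))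
  have h2C : log (2 * C) = log (deltaK K) + log (ν / nK K) := by
    rw [← log_mul (by positivity) (by positivity), hC_def]; congr 1; field_simp
  have heν : log (exp 1 * ν / nK K) = 1 + log (ν / nK K) := by
    rw [mul_div_assoc, log_mul (exp_ne_zero 1) (by positivity), log_exp]
  refine (((hmain.congr_right fun x => mul_one _).add hconst).add
    (hε'.congr' (eventually_atTop.2 ⟨3, fun x hx => (hε x hx).symm⟩) EventuallyEq.rfl)).congr'
    (eventually_atTop.2 ⟨3, fun x hx => ?_⟩) EventuallyEq.rfl
  simp only [hB x hx, heν, h2C]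
  ring

open Asymptotics in
/-- the asymptotic expansion, as `x → +∞`, of the bound `B(x)` of
Theorem 1.1, with `ν := (√5 − 1)e^{√5}/2`. -/
theorem statement_18
    (K : Type*) [Field K] [NumberField K]
    (ν : ℝ) (hν : ν = (Real.sqrt 5 - 1) * Real.exp (Real.sqrt 5) / 2)
    (a w T ε B : ℝ → ℝ)
    (ha : ∀ x : ℝ, 3 ≤ x → a x = (Real.sqrt 5 - 1) * Real.pi * Real.sqrt x / (2 * nK K)
            + 21.3270 + 33.3542 / nK K)
    (hw0 : ∀ x : ℝ, 3 ≤ x → 0 ≤ w x)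
    (hw : ∀ x : ℝ, 3 ≤ x →
            w x * Real.exp (w x) = Real.exp (Real.sqrt 5) / (2 * Real.pi) * (deltaK K * a x))
    (hT : ∀ x : ℝ, 3 ≤ x → T x = 8.2822 + a x / w x)
    (hε : ∀ x : ℝ, 3 ≤ x →
            ε x = max 0 (dK K * Real.log x - 3.6133 * nK K * Real.sqrt x / T x))
    (hB : ∀ x : ℝ, 3 ≤ x →
            B x = Real.sqrt x / Real.pi *
                ((1 / 2 * Real.log (Real.exp (w x + 1) + 33.5251 * deltaK K) ^ 2
                    - 1 / 2 * Real.log (deltaK K) ^ 2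
                    + 3.9792 * Real.log (deltaK K) - 3.4969) * nK K
                  + 25.5362)
              + 1.0155 * Real.log (DeltaK K) - 2.1042 * nK K + 8.8590 + ε x) :
    (fun x : ℝ => B x
        - (nK K * (Real.sqrt x / (2 * Real.pi)) *
            (1 / 4 * Real.log x ^ 2
              - Real.log x * Real.log (Real.log x)
              + (Real.log (deltaK K) + Real.log (Real.exp 1 * ν / nK K)) * Real.log x
              + Real.log (Real.log x) ^ 2
              - 2 * (Real.log (deltaK K) + Real.log (ν / nK K)) * Real.log (Real.log x)
              + (2 * Real.log (ν / nK K) + 7.9584) * Real.log (deltaK K)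
              + Real.log (ν / nK K) ^ 2
              - 5.9938)
          + 25.5362 * Real.sqrt x / Real.pi))
      =o[atTop] fun x : ℝ => Real.sqrt x :=
  statement_18_general K ν hν a w T ε B ha hw hT hε hB
end
end
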